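/- The derivative at x = 1 of the theta-type function ψ(x) = ∑_{n=1}^∞ e^{−n²πx} satisfies ψ′(1) = −(1/8)·(1 + 2·ψ(1)); that is, π·∑_{n=1}^∞ n² e^{−n²π} = (1/8)·(1 + 2·∑_{n=1}^∞ e^{−n²π}). -/
import Mathlib


open Complex

/-- The Jacobi theta-type function `ψ(x) = ∑_{n=1}^∞ exp(−n²πx)`. -/
noncomputable def jacobiPsi (x : ℝ) : ℝ :=
  ∑' n : ℕ, Real.exp (-((n : ℝ) + 1) ^ 2 * Real.pi * x)

/-- The derivative at `x = 1` of `ψ` satisfies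
`ψ'(1) = −(1/8)(1 + 2 ψ(1))`; that is,
`π ∑ n² exp(−n²π) = (1/8)(1 + 2 ∑ exp(−n²π))`. -/
lemma aux_sumA {x : ℝ} (hx : 0 < x) :
    Summable (fun n : ℕ => Real.exp (-((n : ℝ) + 1) ^ 2 * Real.pi * x)) := by
  have hr0 : (0:ℝ) < Real.exp (-(Real.pi * x)) := Real.exp_pos _
  have hr1 : Real.exp (-(Real.pi * x)) < 1 := by
    rw [Real.exp_lt_one_iff, neg_lt_zero]
    positivity
  have hs : Summable (fun n : ℕ => Real.exp (-(Real.pi * x)) ^ (n + 1)) := by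
    simpa [pow_succ'] using (summable_geometric_of_lt_one hr0.le hr1).mul_left
      (Real.exp (-(Real.pi * x)))
  refine hs.of_nonneg_of_le (fun n => (Real.exp_pos _).le) (fun n => ?_)
  have h1 : Real.exp (-((n : ℝ) + 1) ^ 2 * Real.pi * x)
      = Real.exp (-(Real.pi * x)) ^ ((n + 1) ^ 2) := by
    rw [← Real.exp_nat_mul]
    congr 1
    push_cast
    ring
  rw [h1]
  exact pow_le_pow_of_le_one hr0.le hr1.le (Nat.le_self_pow two_ne_zero _)

lemma aux_sumB {x : ℝ} (hx : 0 < x) :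
    Summable (fun n : ℕ =>
      ((n : ℝ) + 1) ^ 2 * Real.pi * Real.exp (-((n : ℝ) + 1) ^ 2 * Real.pi * x)) := by
  set r := Real.exp (-(Real.pi * x)) with hr
  have hr0 : (0:ℝ) < r := Real.exp_pos _
  have hr1 : r < 1 := by
    rw [hr, Real.exp_lt_one_iff, neg_lt_zero]; positivity
  have hs0 : Summable (fun n : ℕ => ((n : ℝ)) ^ 2 * r ^ n) :=
    summable_pow_mul_geometric_of_norm_lt_one 2 (by rwa [Real.norm_eq_abs, abs_of_pos hr0])
  have hs1 : Summable (fun n : ℕ => (((n : ℝ)) + 1) ^ 2 * r ^ (n + 1)) := by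
    have := (summable_nat_add_iff 1).mpr hs0
    simpa [Nat.cast_add] using this
  refine ((hs1.mul_left Real.pi).of_nonneg_of_le (fun n => by positivity) (fun n => ?_))
  have h1 : Real.exp (-((n : ℝ) + 1) ^ 2 * Real.pi * x) ≤ r ^ (n + 1) := by
    have h2 : Real.exp (-((n : ℝ) + 1) ^ 2 * Real.pi * x) = r ^ ((n + 1) ^ 2) := by
      rw [hr, ← Real.exp_nat_mul]; congr 1; push_cast; ring
    rw [h2]
    exact pow_le_pow_of_le_one hr0.le hr1.le (Nat.le_self_pow two_ne_zero _)
  calc ((n : ℝ) + 1) ^ 2 * Real.pi * Real.exp (-((n : ℝ) + 1) ^ 2 * Real.pi * x)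
      ≤ ((n : ℝ) + 1) ^ 2 * Real.pi * r ^ (n + 1) := by
        apply mul_le_mul_of_nonneg_left h1 (by positivity)
    _ = Real.pi * (((n : ℝ) + 1) ^ 2 * r ^ (n + 1)) := by ring

lemma aux_int_sum {a : ℝ} (ha : 0 < a) :
    ∑' n : ℤ, Real.exp (-Real.pi * a * (n : ℝ) ^ 2) = 1 + 2 * jacobiPsi a := by
  have key : ∀ n : ℕ, Real.exp (-Real.pi * a * ((n : ℝ) + 1) ^ 2)
      = Real.exp (-((n : ℝ) + 1) ^ 2 * Real.pi * a) := fun n => by ring_nf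
  have hs : Summable (fun n : ℕ => Real.exp (-Real.pi * a * (((n : ℕ) : ℝ)) ^ 2)) := by
    rw [← summable_nat_add_iff 1]
    refine (aux_sumA ha).congr (fun n => ?_)
    push_cast
    rw [key]
  have hneg : (fun n : ℕ => Real.exp (-Real.pi * a * (((-(n+1) : ℤ)) : ℝ) ^ 2))
      = (fun n : ℕ => Real.exp (-Real.pi * a * (((n : ℝ)) + 1) ^ 2)) := by
    funext n; push_cast; ring_nf
  have hsneg : Summable (fun n : ℕ => Real.exp (-Real.pi * a * (((-(n+1) : ℤ)) : ℝ) ^ 2)) := by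
    rw [hneg]
    refine (aux_sumA ha).congr (fun n => (key n).symm)
  have hZ : Summable (fun n : ℤ => Real.exp (-Real.pi * a * (n : ℝ) ^ 2)) := by
    refine Summable.of_nat_of_neg_add_one ?_ hsneg
    exact hs.congr (fun n => by push_cast; ring_nf)
  rw [← tsum_nat_add_neg_add_one hZ]
  have h1 : ∀ n : ℕ, Real.exp (-Real.pi * a * (((n : ℤ) : ℝ)) ^ 2)
      + Real.exp (-Real.pi * a * (((-(n+1) : ℤ)) : ℝ) ^ 2)
      = Real.exp (-Real.pi * a * ((n : ℝ)) ^ 2)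
      + Real.exp (-Real.pi * a * (((n : ℝ)) + 1) ^ 2) := by
    intro n; push_cast; ring_nf
  rw [tsum_congr h1, Summable.tsum_add hs ((aux_sumA ha).congr (fun n => (key n).symm))]
  rw [Summable.tsum_eq_zero_add hs]
  have h3 : ∑' n : ℕ, Real.exp (-Real.pi * a * (((n : ℝ)) + 1) ^ 2) = jacobiPsi a :=
    tsum_congr (fun n => by rw [key])
  push_cast
  rw [h3]
  norm_num
  ring

lemma aux_funeq {x : ℝ} (hx : 0 < x) :
    1 + 2 * jacobiPsi x = x ^ (-(1/2) : ℝ) * (1 + 2 * jacobiPsi x⁻¹) := by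
  have h := Real.tsum_exp_neg_mul_int_sq hx
  rw [aux_int_sum hx] at h
  have h2 : ∑' n : ℤ, Real.exp (-Real.pi / x * (n : ℝ) ^ 2)
      = ∑' n : ℤ, Real.exp (-Real.pi * x⁻¹ * (n : ℝ) ^ 2) :=
    tsum_congr (fun n => by rw [neg_div, div_eq_mul_inv, ← neg_mul])
  rw [h2, aux_int_sum (inv_pos.mpr hx)] at h
  rw [h, one_div, ← Real.rpow_neg hx.le]

set_option maxHeartbeats 1000000 in
lemma aux_deriv {y : ℝ} (hy : 1/2 < y) :
    HasDerivAt jacobiPsi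
      (∑' n : ℕ, (Real.exp (-((n : ℝ) + 1) ^ 2 * Real.pi * y)
        * (-((n : ℝ) + 1) ^ 2 * Real.pi))) y := by
  have hrep : jacobiPsi
      = fun x : ℝ => ∑' n : ℕ, Real.exp (-((n : ℝ) + 1) ^ 2 * Real.pi * x) := rfl
  rw [hrep]
  have hg : ∀ (n : ℕ) (z : ℝ), z ∈ Set.Ioi (1/2 : ℝ) →
      HasDerivAt (fun x : ℝ => Real.exp (-((n : ℝ) + 1) ^ 2 * Real.pi * x))
        (Real.exp (-((n : ℝ) + 1) ^ 2 * Real.pi * z) * (-((n : ℝ) + 1) ^ 2 * Real.pi)) z := by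
    intro n z _
    have h1 := ((hasDerivAt_id z).const_mul (-((n : ℝ) + 1) ^ 2 * Real.pi)).exp
    simpa using h1
  have hg' : ∀ (n : ℕ) (z : ℝ), z ∈ Set.Ioi (1/2 : ℝ) →
      ‖Real.exp (-((n : ℝ) + 1) ^ 2 * Real.pi * z) * (-((n : ℝ) + 1) ^ 2 * Real.pi)‖
        ≤ ((n : ℝ) + 1) ^ 2 * Real.pi * Real.exp (-((n : ℝ) + 1) ^ 2 * Real.pi * (1/2)) := by
    intro n z hz
    have hA : -((n : ℝ) + 1) ^ 2 * Real.pi < 0 := by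
      have h1 : (0:ℝ) < ((n : ℝ) + 1) ^ 2 * Real.pi := by positivity
      nlinarith
    have hz' : (1:ℝ)/2 < z := hz
    have hexp : Real.exp (-((n : ℝ) + 1) ^ 2 * Real.pi * z)
        ≤ Real.exp (-((n : ℝ) + 1) ^ 2 * Real.pi * (1/2)) := by
      apply Real.exp_le_exp.mpr
      nlinarith
    rw [Real.norm_eq_abs, abs_mul, abs_of_pos (Real.exp_pos _), abs_of_neg hA]
    have hE : (0:ℝ) < Real.exp (-((n : ℝ) + 1) ^ 2 * Real.pi * z) := Real.exp_pos _
    nlinarith [(by positivity : (0:ℝ) ≤ ((n : ℝ) + 1) ^ 2 * Real.pi)]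
  exact hasDerivAt_tsum_of_isPreconnected (aux_sumB one_half_pos) isOpen_Ioi
    isPreconnected_Ioi hg hg' (Set.mem_Ioi.mpr (by norm_num)) (aux_sumA one_pos) hy


theorem stmt_14 :
    HasDerivAt jacobiPsi (-(1 / 8) * (1 + 2 * jacobiPsi 1)) 1 ∧
    Real.pi * ∑' n : ℕ, ((n : ℝ) + 1) ^ 2 * Real.exp (-((n : ℝ) + 1) ^ 2 * Real.pi) =
      1 / 8 * (1 + 2 * ∑' n : ℕ, Real.exp (-((n : ℝ) + 1) ^ 2 * Real.pi)) := by
  set D : ℝ := ∑' n : ℕ, (Real.exp (-((n : ℝ) + 1) ^ 2 * Real.pi * 1)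
    * (-((n : ℝ) + 1) ^ 2 * Real.pi)) with hD
  have hψ : HasDerivAt jacobiPsi D 1 := aux_deriv (by norm_num)
  have hg : HasDerivAt (fun x => 1 + 2 * jacobiPsi x) (2 * D) 1 :=
    (hψ.const_mul 2).const_add 1
  have hinv : HasDerivAt (fun x : ℝ => x⁻¹) (-1) 1 := by
    simpa using hasDerivAt_inv (by norm_num : (1:ℝ) ≠ 0)
  have hψ' : HasDerivAt jacobiPsi D ((fun x : ℝ => x⁻¹) 1) := by
    simpa using hψ
  have hcomp : HasDerivAt (fun x : ℝ => jacobiPsi x⁻¹) (D * -1) 1 :=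
    hψ'.comp 1 hinv
  have hcomp2 : HasDerivAt (fun x : ℝ => 1 + 2 * jacobiPsi x⁻¹) (2 * (D * -1)) 1 :=
    (hcomp.const_mul 2).const_add 1
  have hr : HasDerivAt (fun x : ℝ => x ^ (-(1/2) : ℝ)) (-(1/2)) 1 := by
    have := Real.hasDerivAt_rpow_const (x := (1:ℝ)) (p := (-(1/2) : ℝ)) (Or.inl one_ne_zero)
    simpa using this
  have hh : HasDerivAt (fun x : ℝ => x ^ (-(1/2) : ℝ) * (1 + 2 * jacobiPsi x⁻¹))
      (-(1/2) * (1 + 2 * jacobiPsi 1) - 2 * D) 1 := by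
    have h1 := hr.mul hcomp2
    have h2 : -(1/2) * (1 + 2 * jacobiPsi 1⁻¹) + (1:ℝ) ^ (-(1/2) : ℝ) * (2 * (D * -1))
        = -(1/2) * (1 + 2 * jacobiPsi 1) - 2 * D := by
      rw [inv_one, Real.one_rpow]; ring
    rwa [h2] at h1
  have heq : (fun x : ℝ => 1 + 2 * jacobiPsi x)
      =ᶠ[nhds (1:ℝ)] (fun x : ℝ => x ^ (-(1/2) : ℝ) * (1 + 2 * jacobiPsi x⁻¹)) := by
    filter_upwards [Ioi_mem_nhds (zero_lt_one)] with x hx using aux_funeq hx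
  have hg2 : HasDerivAt (fun x => 1 + 2 * jacobiPsi x)
      (-(1/2) * (1 + 2 * jacobiPsi 1) - 2 * D) 1 :=
    hh.congr_of_eventuallyEq heq
  have hkey : 2 * D = -(1/2) * (1 + 2 * jacobiPsi 1) - 2 * D := hg.unique hg2
  have hDval : D = -(1/8) * (1 + 2 * jacobiPsi 1) := by linarith
  constructor
  · rw [← hDval]; exact hψ
  · have hDS : D = -(Real.pi * ∑' n : ℕ,
        ((n : ℝ) + 1) ^ 2 * Real.exp (-((n : ℝ) + 1) ^ 2 * Real.pi)) := by
      rw [hD, ← tsum_mul_left, ← tsum_neg]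
      refine tsum_congr (fun n => ?_)
      rw [mul_one]
      ring
    have hψ1 : jacobiPsi 1 = ∑' n : ℕ, Real.exp (-((n : ℝ) + 1) ^ 2 * Real.pi) :=
      tsum_congr (fun n => by rw [mul_one])
    rw [← hψ1]
    rw [hDS] at hDval
    linarith
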